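/- Let h ≥ 1, let X ⊆ B^h be nonempty, let G = Q_h(X), let v be a minimal vertex of G, let u ∈ V(G) have degree h in G, and let β be an isometric embedding of G into Q_h with β(u) = 0^h. Then the map w ↦ β(w) ⊕ β(v) is a proper embedding of G into Q_h, and it sends v to 0^h. -/

import Mathlib

open SimpleGraph

/-- The hypercube `Q_h` on binary words of length `h`: two words are adjacent
iff their Hamming distance is `1`. -/
def Qcube (h : ℕ) : SimpleGraph (Fin h → Bool) where
  Adj u v := hammingDist u v = 1
  symm := ⟨fun u v huv => by show hammingDist v u = 1; rwa [hammingDist_comm]⟩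
  loopless := ⟨fun u hu => by simp only [hammingDist_self] at hu <;> exact absurd hu (by norm_num)⟩

/-- Vertex set of the daisy cube `Q_h(X)`: all words below some element of `X`. -/
def daisyVerts {h : ℕ} (X : Set (Fin h → Bool)) : Set (Fin h → Bool) :=
  {v | ∃ x ∈ X, v ≤ x}

/-- The daisy cube `Q_h(X)`, the subgraph of `Q_h` induced by `daisyVerts X`. -/
def daisyGraph {h : ℕ} (X : Set (Fin h → Bool)) : SimpleGraph (daisyVerts X) :=
  SimpleGraph.induce (daisyVerts X) (Qcube h)

/-- `\widehat X`: the set of maximal elements of the poset `(X, ≤)`. -/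
def maxSet {h : ℕ} (X : Set (Fin h → Bool)) : Set (Fin h → Bool) :=
  {x ∈ X | ∀ y ∈ X, x ≤ y → x = y}

/-- The all-zeros word `0^h`. -/
def zeroW (h : ℕ) : Fin h → Bool := fun _ => false

/-- Bitwise XOR of words. -/
def xorW {h : ℕ} (u v : Fin h → Bool) : Fin h → Bool := fun i => xor (u i) (v i)

/-- Bitwise AND of words. -/
def andW {h : ℕ} (u v : Fin h → Bool) : Fin h → Bool := fun i => u i && v i

/-- The weight `w(u)`: the number of ones of a word. -/
def weightW {h : ℕ} (u : Fin h → Bool) : ℕ :=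
  (Finset.univ.filter fun i => u i = true).card

/-- The interval `I_G(u,v)`: vertices lying on shortest `u,v`-paths. -/
def gInterval {V : Type*} (G : SimpleGraph V) (u v : V) : Set V :=
  {w | G.dist u w + G.dist w v = G.dist u v}

/-- `N^u(v)`: neighbors of `v` that are closer to `u` than `v` is. -/
def lowerNbrs {V : Type*} (G : SimpleGraph V) (u v : V) : Set V :=
  {z | G.Adj v z ∧ G.dist u z + 1 = G.dist u v}

/-- `α` is an isometric embedding of `G` into `Q_h`. -/
def IsIsomEmb {V : Type*} (G : SimpleGraph V) {h : ℕ} (α : V → Fin h → Bool) : Prop :=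
  ∀ a b, hammingDist (α a) (α b) = G.dist a b

/-- `α` is a proper embedding of `G` into `Q_h`: an isometric embedding such that
`G` is isomorphic to the daisy cube generated by the image of `α`. -/
def IsProperEmb {V : Type*} (G : SimpleGraph V) {h : ℕ} (α : V → Fin h → Bool) : Prop :=
  IsIsomEmb G α ∧ Nonempty (G ≃g daisyGraph (Set.range α))

/-- `v` is a minimal vertex of `G`: some proper embedding sends `v` to `0^h`. -/
def IsMinVertex {V : Type*} (G : SimpleGraph V) (h : ℕ) (v : V) : Prop :=
  ∃ α : V → Fin h → Bool, IsProperEmb G α ∧ α v = zeroW h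

/-- The labeling conditions of Proposition `cubes`/Lemma `partial`: `α v = 0^h`,
the neighbors of `v` get pairwise distinct weight-one labels, and every other
vertex gets the bitwise OR of the labels of its down-neighbors. -/
def goodLabeling {V : Type*} (G : SimpleGraph V) {h : ℕ} (v : V)
    (α : V → Fin h → Bool) : Prop :=
  α v = zeroW h ∧
  Set.InjOn α (G.neighborSet v) ∧
  (∀ z ∈ G.neighborSet v, weightW (α z) = 1) ∧
  (∀ u ∉ insert v (G.neighborSet v),
    ∀ i, α u i = true ↔ ∃ z ∈ lowerNbrs G v u, α z i = true)


section MainProof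
open Finset

lemma ham_xor {h : ℕ} (a b c : Fin h → Bool) :
    hammingDist (xorW a c) (xorW b c) = hammingDist a b := by
  unfold hammingDist xorW
  congr 1
  apply Finset.filter_congr
  intro i _
  constructor <;> intro hi <;> intro he <;> apply hi <;>
    revert he <;> cases a i <;> cases b i <;> cases c i <;> simp

lemma ham_zero {h : ℕ} (a : Fin h → Bool) : hammingDist (zeroW h) a = weightW a := by
  unfold hammingDist zeroW weightW
  congr 1
  apply Finset.filter_congr
  intro i _
  cases a i <;> simp

lemma weight_as_sum {h : ℕ} (a : Fin h → Bool) :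
    weightW a = ∑ j, (if a j = true then 1 else 0) := by
  rw [weightW, Finset.card_filter]

lemma weight_update_false {h : ℕ} (a : Fin h → Bool) (i : Fin h) (ha : a i = true) :
    weightW (Function.update a i false) + 1 = weightW a := by
  rw [weight_as_sum, weight_as_sum]
  rw [← Finset.sum_erase_add _ _ (Finset.mem_univ i), ← Finset.sum_erase_add _ _ (Finset.mem_univ i)]
  have : ∀ j ∈ Finset.univ.erase i, (if Function.update a i false j = true then 1 else 0)
      = (if a j = true then 1 else 0) := by
    intro j hj
    rw [Function.update_of_ne (Finset.ne_of_mem_erase hj)]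
  rw [Finset.sum_congr rfl this]
  simp [ha]

lemma ham_update_false {h : ℕ} (a : Fin h → Bool) (i : Fin h) :
    a i = true → hammingDist (Function.update a i false) a = 1 := by
  intro ha
  unfold hammingDist
  rw [Finset.card_eq_one]
  refine ⟨i, ?_⟩
  ext j
  simp only [Finset.mem_filter, Finset.mem_univ, true_and, Finset.mem_singleton]
  constructor
  · intro hj; by_contra hne; exact hj (by rw [Function.update_of_ne hne])
  · intro hj; subst hj; simp [ha]

lemma update_le {h : ℕ} (a : Fin h → Bool) (i : Fin h) :
    Function.update a i false ≤ a := by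
  intro j
  by_cases hj : j = i
  · subst hj; simp
  · rw [Function.update_of_ne hj]

lemma eq_of_le_of_weight {h : ℕ} {a b : Fin h → Bool} (hle : a ≤ b)
    (hw : weightW b ≤ weightW a) : a = b := by
  have hsub : (Finset.univ.filter fun i => a i = true) ⊆ (Finset.univ.filter fun i => b i = true) := by
    intro i hi
    simp only [Finset.mem_filter, Finset.mem_univ, true_and] at hi ⊢
    have := hle i; rw [hi] at this; exact Bool.eq_true_of_true_le this
  have := Finset.eq_of_subset_of_card_le hsub hw
  funext j
  have hj := Finset.ext_iff.mp this j
  simp only [Finset.mem_filter, Finset.mem_univ, true_and] at hj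
  cases hb : b j
  · cases ha : a j
    · rfl
    · exact absurd (hj.mp ha) (by simp [hb])
  · exact (hj.mpr hb)

lemma ham_one_index {h : ℕ} {a b : Fin h → Bool} (hab : hammingDist a b = 1) :
    ∃ i, a i ≠ b i ∧ ∀ j, j ≠ i → a j = b j := by
  unfold hammingDist at hab
  rw [Finset.card_eq_one] at hab
  obtain ⟨i, hi⟩ := hab
  have := Finset.ext_iff.mp hi
  simp only [Finset.mem_filter, Finset.mem_univ, true_and, Finset.mem_singleton] at this
  refine ⟨i, (this i).mpr rfl, fun j hj => ?_⟩
  by_contra hne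
  exact hj ((this j).mp hne)

lemma eq_update_of_ham_one {h : ℕ} {a b : Fin h → Bool} {i : Fin h}
    (hne : a i ≠ b i) (hagree : ∀ j, j ≠ i → a j = b j)
    (hw : weightW a + 1 = weightW b) : b i = true ∧ a = Function.update b i false := by
  have hbi : b i = true := by
    by_contra hbi
    have hbi' : b i = false := by simpa using hbi
    have hai : a i = true := by
      cases hai : a i
      · exact absurd (hai.trans hbi'.symm) hne
      · rfl
    have : weightW b + 1 = weightW a := by
      have hb : b = Function.update a i false := by
        funext j
        by_cases hj : j = i
        · subst hj; simp [hbi']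
        · rw [Function.update_of_ne hj, hagree j hj]
      rw [hb]; exact weight_update_false a i hai
    omega
  have hai : a i = false := by
    cases hai : a i
    · rfl
    · exact absurd (hai.trans hbi.symm) hne
  refine ⟨hbi, ?_⟩
  funext j
  by_cases hj : j = i
  · subst hj; simp [hai]
  · rw [Function.update_of_ne hj, hagree j hj]

lemma daisy_adj {h : ℕ} {X : Set (Fin h → Bool)} (a b : daisyVerts X) :
    (daisyGraph X).Adj a b ↔ hammingDist a.val b.val = 1 := Iff.rfl

lemma weight_zero_eq {h : ℕ} {a : Fin h → Bool} (hw : weightW a = 0) : a = zeroW h := by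
  unfold weightW at hw
  rw [Finset.card_eq_zero, Finset.filter_eq_empty_iff] at hw
  funext j
  have := hw (Finset.mem_univ j)
  simpa [zeroW] using this

lemma daisy_connected {h : ℕ} {X : Set (Fin h → Bool)} (hX : X.Nonempty) :
    (daisyGraph X).Connected := by
  obtain ⟨x, hx⟩ := hX
  have hz : zeroW h ∈ daisyVerts X := ⟨x, hx, fun i => Bool.false_le _⟩
  have key : ∀ (n : ℕ) (w : daisyVerts X), weightW w.val ≤ n →
      (daisyGraph X).Reachable w ⟨zeroW h, hz⟩ := by
    intro n
    induction n with
    | zero =>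
      intro w hw
      have : w.val = zeroW h := weight_zero_eq (Nat.le_zero.mp hw)
      have : w = ⟨zeroW h, hz⟩ := Subtype.ext this
      rw [this]
    | succ n ih =>
      intro w hw
      by_cases hcase : weightW w.val ≤ n
      · exact ih w hcase
      have hpos : 0 < weightW w.val := by omega
      have : ∃ i, w.val i = true := by
        by_contra hno
        push_neg at hno
        have : weightW w.val = 0 := by
          unfold weightW
          rw [Finset.card_eq_zero, Finset.filter_eq_empty_iff]
          intro j _
          exact hno j
        omega
      obtain ⟨i, hi⟩ := this
      obtain ⟨xw, hxw, hwle⟩ := w.2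
      have hmem : Function.update w.val i false ∈ daisyVerts X :=
        ⟨xw, hxw, le_trans (update_le _ _) hwle⟩
      have hadj : (daisyGraph X).Adj w ⟨Function.update w.val i false, hmem⟩ :=
        (daisy_adj _ _).mpr (by rw [hammingDist_comm]; exact ham_update_false _ _ hi)
      have hwt := weight_update_false w.val i hi
      refine (hadj.reachable).trans (ih ⟨Function.update w.val i false, hmem⟩ ?_)
      show weightW (Function.update w.val i false) ≤ n
      omega
  have : Nonempty (daisyVerts X) := ⟨⟨zeroW h, hz⟩⟩
  exact SimpleGraph.Connected.mk
    (fun a b => (key _ a le_rfl).trans (key _ b le_rfl).symm)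

lemma key_transfer {V : Type*} [Fintype V] {G : SimpleGraph V} (hc : G.Connected) {h : ℕ}
    {σ τ : V → Fin h → Bool} {v : V}
    (hσ : IsIsomEmb G σ) (hτ : IsIsomEmb G τ)
    (hσv : σ v = zeroW h) (hτv : τ v = zeroW h)
    (hdc : ∀ (y : Fin h → Bool) (w : V), y ≤ σ w → y ∈ Set.range σ) :
    ∀ (y : Fin h → Bool) (w : V), y ≤ τ w → y ∈ Set.range τ := by
  classical
  have hσw : ∀ w, weightW (σ w) = G.dist v w := fun w => by
    rw [← ham_zero, ← hσv]; exact hσ v w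
  have hτw : ∀ w, weightW (τ w) = G.dist v w := fun w => by
    rw [← ham_zero, ← hτv]; exact hτ v w
  have τinj : Function.Injective τ := by
    intro a b hab
    have h1 := hτ a b
    rw [hab, hammingDist_self] at h1
    exact hc.dist_eq_zero_iff.mp h1.symm
  have step : ∀ (w : V) (i : Fin h), τ w i = true →
      ∃ z, τ z = Function.update (τ w) i false := by
    intro w i hi
    set Lw : Finset V :=
      Finset.univ.filter (fun z => G.Adj w z ∧ G.dist v z + 1 = G.dist v w) with hLwdef
    set Bτ : Finset (Fin h) := Finset.univ.filter (fun j => τ w j = true) with hBτdef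
    set Bσ : Finset (Fin h) := Finset.univ.filter (fun j => σ w j = true) with hBσdef
    have zex : ∀ j : Fin h, ∃ z, σ z = Function.update (σ w) j false := fun j =>
      (hdc _ w (update_le _ j)).imp (fun z hz => hz)
    choose zf hzf using zex
    have hBσLw : ∀ j ∈ Bσ, zf j ∈ Lw := by
      intro j hj
      rw [hBσdef, Finset.mem_filter] at hj
      have hσwj : σ w j = true := hj.2
      have h1 : hammingDist (σ (zf j)) (σ w) = 1 := by
        rw [hzf]; exact ham_update_false _ _ hσwj
      have hd1 : G.dist (zf j) w = 1 := by rw [← hσ]; exact h1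
      have hadj : G.Adj w (zf j) := (SimpleGraph.dist_eq_one_iff_adj.mp hd1).symm
      have hwt : weightW (σ (zf j)) + 1 = weightW (σ w) := by
        rw [hzf]; exact weight_update_false _ _ hσwj
      rw [hLwdef, Finset.mem_filter]
      refine ⟨Finset.mem_univ _, hadj, ?_⟩
      rw [← hσw, ← hσw]; exact hwt
    have hinjσ : Set.InjOn zf Bσ := by
      intro j hj j' hj' he
      rw [hBσdef, Finset.coe_filter] at hj hj'
      have hj2 : σ w j = true := hj.2
      have hj'2 : σ w j' = true := hj'.2
      by_contra hne
      have heq : Function.update (σ w) j false = Function.update (σ w) j' false := by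
        rw [← hzf, ← hzf, he]
      have := congrFun heq j
      rw [Function.update_self, Function.update_of_ne hne] at this
      rw [hj2] at this
      exact Bool.noConfusion this.symm
    have hc1 : Bσ.card ≤ Lw.card := Finset.card_le_card_of_injOn zf hBσLw hinjσ
    set W : Finset (Fin h → Bool) := Bτ.image (fun j => Function.update (τ w) j false)
      with hWdef
    have hLwW : ∀ z ∈ Lw, τ z ∈ W := by
      intro z hz
      rw [hLwdef, Finset.mem_filter] at hz
      obtain ⟨-, hadj, hdist⟩ := hz
      have h1 : hammingDist (τ z) (τ w) = 1 := by
        rw [hτ]; exact SimpleGraph.dist_eq_one_iff_adj.mpr hadj.symm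
      obtain ⟨j, hne, hagree⟩ := ham_one_index h1
      have hw' : weightW (τ z) + 1 = weightW (τ w) := by
        rw [hτw, hτw]; exact hdist
      obtain ⟨hbj, heq⟩ := eq_update_of_ham_one hne hagree hw'
      rw [hWdef]
      exact Finset.mem_image.mpr ⟨j, Finset.mem_filter.mpr ⟨Finset.mem_univ _, hbj⟩, heq.symm⟩
    have hc2 : Lw.card ≤ W.card :=
      Finset.card_le_card_of_injOn τ hLwW (fun a _ b _ he => τinj he)
    have hWB : W.card ≤ Bτ.card := Finset.card_image_le
    have hBB : Bσ.card = Bτ.card := by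
      have h1 : Bσ.card = weightW (σ w) := rfl
      have h2 : Bτ.card = weightW (τ w) := rfl
      rw [h1, h2, hσw, hτw]
    have himg : Lw.image τ = W := by
      apply Finset.eq_of_subset_of_card_le
      · intro y hy
        obtain ⟨z, hz, rfl⟩ := Finset.mem_image.mp hy
        exact hLwW z hz
      · rw [Finset.card_image_of_injOn (fun a _ b _ he => τinj he)]
        omega
    have hmem : Function.update (τ w) i false ∈ W := by
      rw [hWdef]
      exact Finset.mem_image.mpr ⟨i, Finset.mem_filter.mpr ⟨Finset.mem_univ _, hi⟩, rfl⟩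
    rw [← himg] at hmem
    obtain ⟨z, _, hz⟩ := Finset.mem_image.mp hmem
    exact ⟨z, hz⟩
  have main : ∀ (n : ℕ) (w : V) (y : Fin h → Bool), y ≤ τ w →
      weightW (τ w) ≤ weightW y + n → y ∈ Set.range τ := by
    intro n
    induction n with
    | zero =>
      intro w y hle hw
      exact ⟨w, (eq_of_le_of_weight hle (by omega)).symm⟩
    | succ n ih =>
      intro w y hle hw
      by_cases hcase : weightW (τ w) ≤ weightW y + n
      · exact ih w y hle hcase
      have : ∃ i, τ w i = true ∧ y i = false := by
        by_contra hno
        push_neg at hno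
        have hsub : (Finset.univ.filter fun j => τ w j = true) ⊆
            (Finset.univ.filter fun j => y j = true) := by
          intro j hj
          rw [Finset.mem_filter] at hj ⊢
          refine ⟨Finset.mem_univ _, ?_⟩
          have := hno j hj.2
          cases hy : y j
          · exact absurd hy this
          · rfl
        have := Finset.card_le_card hsub
        have h1 : weightW (τ w) ≤ weightW y := this
        omega
      obtain ⟨i, hti, hyi⟩ := this
      obtain ⟨z, hz⟩ := step w i hti
      apply ih z y
      · rw [hz]
        intro j
        by_cases hj : j = i
        · subst hj; rw [hyi]; exact Bool.false_le _
        · rw [Function.update_of_ne hj]; exact hle j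
      · have hwt := weight_update_false (τ w) i hti
        rw [hz]
        omega
  intro y w hy
  exact main (weightW (τ w)) w y hy (by omega)

/-- Any isometric embedding with down-closed range, of a connected graph,
is a proper embedding. -/
lemma proper_of_downclosed {h : ℕ} {X : Set (Fin h → Bool)}
    (hc : (daisyGraph X).Connected)
    {γ : daisyVerts X → Fin h → Bool} (hγ : IsIsomEmb (daisyGraph X) γ)
    (hdc : ∀ (y : Fin h → Bool) (w : daisyVerts X), y ≤ γ w → y ∈ Set.range γ) :
    IsProperEmb (daisyGraph X) γ := by
  refine ⟨hγ, ?_⟩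
  have γinj : Function.Injective γ := by
    intro a b hab
    have h1 := hγ a b
    rw [hab, hammingDist_self] at h1
    exact hc.dist_eq_zero_iff.mp h1.symm
  have hbij : Function.Bijective (fun w : daisyVerts X =>
      (⟨γ w, ⟨γ w, ⟨w, rfl⟩, le_rfl⟩⟩ : daisyVerts (Set.range γ))) := by
    constructor
    · intro a b hab
      exact γinj (congrArg Subtype.val hab)
    · rintro ⟨y, x, ⟨w, rfl⟩, hyx⟩
      obtain ⟨w', hw'⟩ := hdc y w hyx
      exact ⟨w', Subtype.ext hw'⟩
  refine ⟨⟨Equiv.ofBijective _ hbij, @fun a b => ?_⟩⟩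
  show hammingDist (γ a) (γ b) = 1 ↔ (daisyGraph X).Adj a b
  rw [hγ a b]
  exact SimpleGraph.dist_eq_one_iff_adj

end MainProof

/-- Let `v` be a minimal vertex of the daisy cube `G = Q_h(X)`,
`u` a vertex of degree `h`, and `β` an isometric embedding of `G` with
`β(u) = 0^h`. Then `w ↦ β(w) ⊕ β(v)` is a proper embedding of `G` sending `v`
to `0^h`. -/
theorem stmt_13 (h : ℕ) (hh : 1 ≤ h) (X : Set (Fin h → Bool)) (hX : X.Nonempty)
    (v : daisyVerts X) (hv : IsMinVertex (daisyGraph X) h v)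
    (u : daisyVerts X) (hu : ((daisyGraph X).neighborSet u).ncard = h)
    (β : daisyVerts X → Fin h → Bool) (hβ : IsIsomEmb (daisyGraph X) β)
    (hβu : β u = zeroW h) :
    IsProperEmb (daisyGraph X) (fun w => xorW (β w) (β v)) ∧
    xorW (β v) (β v) = zeroW h := by
  classical
  have hc : (daisyGraph X).Connected := daisy_connected hX
  have : Fintype (daisyVerts X) := Fintype.ofFinite _
  set γ : daisyVerts X → Fin h → Bool := fun w => xorW (β w) (β v) with hγdef
  have hγiso : IsIsomEmb (daisyGraph X) γ := fun a b => by
    rw [← hβ a b]; exact ham_xor _ _ _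
  have hγv : γ v = zeroW h := by
    funext i; simp [hγdef, xorW, zeroW]
  obtain ⟨α, ⟨hαiso, ⟨φ⟩⟩, hαv⟩ := hv
  have αinj : Function.Injective α := by
    intro a b hab
    have h1 := hαiso a b
    rw [hab, hammingDist_self] at h1
    exact hc.dist_eq_zero_iff.mp h1.symm
  have hsub : Set.range α ⊆ daisyVerts (Set.range α) := fun y hy => ⟨y, hy, le_rfl⟩
  have hcard : (daisyVerts (Set.range α)).ncard ≤ (Set.range α).ncard := by
    have e1 : daisyVerts X ≃ daisyVerts (Set.range α) := φ.toEquiv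
    have e2 : daisyVerts X ≃ Set.range α := Equiv.ofInjective α αinj
    have hnc := Nat.card_congr (e1.symm.trans e2)
    rw [Nat.card_coe_set_eq, Nat.card_coe_set_eq] at hnc
    omega
  have hset : Set.range α = daisyVerts (Set.range α) :=
    Set.eq_of_subset_of_ncard_le hsub hcard (Set.toFinite _)
  have hαdc : ∀ (y : Fin h → Bool) (w : daisyVerts X), y ≤ α w → y ∈ Set.range α := by
    intro y w hyw
    rw [hset]
    exact ⟨α w, ⟨w, rfl⟩, hyw⟩
  have hγdc := key_transfer hc hαiso hγiso hαv hγv hαdc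
  refine ⟨proper_of_downclosed hc hγiso hγdc, ?_⟩
  funext i
  simp [xorW, zeroW]
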